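/- Let 𝕀 be a finite set, ∼ an equivalence relation on 𝕀 with quotient 𝕀̃, and Q a nonnegative matrix indexed by 𝕀 × 𝕀 such that Qᵀ is compatible with ∼, so that Q̃(ã,b̃) = ∑_{c ∈ ã} Q(c,b) (any representative b of b̃) is well defined. Let h̃ : 𝕀̃ → ℝ be h̃(ã) = |ã|, the cardinality of the class ã. If Q is stochastic (Q𝟙 = 𝟙) then Q̃ h̃ = h̃, and hence the h̃-transform D_{h̃}⁻¹ Q̃ D_{h̃} is a stochastic matrix on 𝕀̃; if Q is substochastic (Q𝟙 ≤ 𝟙) then Q̃ h̃ ≤ h̃, and hence D_{h̃}⁻¹ Q̃ D_{h̃} is substochastic. -/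
import Mathlib


open Finset Matrix

/-- A matrix `M` on a finite set `𝕀` is compatible with the equivalence relation
`s` if for `a₁ ∼ a₂` the sums of `M(a₁,·)` and `M(a₂,·)` over each equivalence
class coincide. -/
def MatCompat {𝕀 : Type*} [Fintype 𝕀] (s : Setoid 𝕀) [DecidableEq (Quotient s)]
    (M : Matrix 𝕀 𝕀 ℝ) : Prop :=
  ∀ a₁ a₂ : 𝕀, s.r a₁ a₂ → ∀ y : Quotient s,
    ∑ c ∈ Finset.univ.filter (fun c => Quotient.mk s c = y), M a₁ c =
      ∑ c ∈ Finset.univ.filter (fun c => Quotient.mk s c = y), M a₂ c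

/-- The coarse-graining of a matrix `M` compatible with `s`:
`M̃(ã,b̃) = ∑_{c ∈ b̃} M(a,c)` for a representative `a` of `ã`. -/
noncomputable def matCG {𝕀 : Type*} [Fintype 𝕀] (s : Setoid 𝕀)
    [DecidableEq (Quotient s)] (M : Matrix 𝕀 𝕀 ℝ) :
    Matrix (Quotient s) (Quotient s) ℝ :=
  fun x y => ∑ c ∈ Finset.univ.filter (fun c => Quotient.mk s c = y), M x.out c

/-- Let `Q ≥ 0` with `Qᵀ` compatible with `∼`, and `h̃(ã) = |ã|`. If `Q` is
stochastic then `Q̃h̃ = h̃` and the `h̃`-transform `D_{h̃}⁻¹ Q̃ D_{h̃}` is stochastic;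
if `Q` is substochastic then `Q̃h̃ ≤ h̃` and `D_{h̃}⁻¹ Q̃ D_{h̃}` is substochastic. -/
theorem coarse_graining_h_transform_stochastic {𝕀 : Type*} [Fintype 𝕀]
    [DecidableEq 𝕀] (s : Setoid 𝕀) [DecidableEq (Quotient s)]
    [Fintype (Quotient s)]
    (Q : Matrix 𝕀 𝕀 ℝ) (hQ0 : ∀ a b, 0 ≤ Q a b) (hQc : MatCompat s Qᵀ) :
    let Qt : Matrix (Quotient s) (Quotient s) ℝ := (matCG s Qᵀ)ᵀ
    let ht : Quotient s → ℝ :=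
      fun y => ((Finset.univ.filter (fun c => Quotient.mk s c = y)).card : ℝ)
    let T : Matrix (Quotient s) (Quotient s) ℝ :=
      Matrix.diagonal (fun y => (ht y)⁻¹) * Qt * Matrix.diagonal ht
    ((Q.mulVec (fun _ => 1) = fun _ => 1) →
      Qt.mulVec ht = ht ∧ (∀ x y, 0 ≤ T x y) ∧
        (T.mulVec (fun _ => 1) = fun _ => 1)) ∧
    ((∀ a, Q.mulVec (fun _ => 1) a ≤ 1) →
      (∀ y, Qt.mulVec ht y ≤ ht y) ∧ (∀ x y, 0 ≤ T x y) ∧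
        ∀ y, T.mulVec (fun _ => 1) y ≤ 1) := by
  intro Qt ht T
  have hht_pos : ∀ x : Quotient s, 0 < ht x := by
    intro x
    have hx : x.out ∈ Finset.univ.filter (fun c => Quotient.mk s c = x) := by
      simp [Quotient.out_eq]
    have := Finset.card_pos.mpr ⟨_, hx⟩
    simpa [ht] using (Nat.cast_pos (α := ℝ)).mpr this
  have hQt0 : ∀ x y, 0 ≤ Qt x y := by
    intro x y
    exact Finset.sum_nonneg fun c _ => hQ0 c y.out
  have hTdef : ∀ x y, T x y = (ht x)⁻¹ * Qt x y * ht y := by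
    intro x y
    simp [T, Matrix.mul_apply, Matrix.diagonal, Finset.sum_ite_eq,
      Finset.mul_sum, Finset.sum_mul]
  have hT0 : ∀ x y, 0 ≤ T x y := by
    intro x y
    rw [hTdef]
    exact mul_nonneg (mul_nonneg (inv_nonneg.2 (hht_pos x).le) (hQt0 x y)) (hht_pos y).le
  have key : ∀ x : Quotient s, Qt.mulVec ht x
      = ∑ c ∈ Finset.univ.filter (fun c => Quotient.mk s c = x), ∑ b, Q c b := by
    intro x
    have h1 : ∀ y : Quotient s, Qt x y * ht y
        = ∑ b ∈ Finset.univ.filter (fun b => Quotient.mk s b = y),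
            ∑ c ∈ Finset.univ.filter (fun c => Quotient.mk s c = x), Q c b := by
      intro y
      have hrep : ∀ b ∈ Finset.univ.filter (fun b => Quotient.mk s b = y),
          ∑ c ∈ Finset.univ.filter (fun c => Quotient.mk s c = x), Q c b = Qt x y := by
        intro b hb
        have hb' : Quotient.mk s b = y := by simpa using hb
        have hrel : s.r b y.out := by
          apply Quotient.exact
          rw [hb']
          exact (Quotient.out_eq y).symm
        have := hQc b y.out hrel x
        simpa [Qt, matCG, Matrix.transpose_apply] using this
      rw [Finset.sum_congr rfl hrep, Finset.sum_const, nsmul_eq_mul]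
      simp [ht, mul_comm]
    have h2 : Qt.mulVec ht x = ∑ y : Quotient s, Qt x y * ht y := by
      simp [Matrix.mulVec, dotProduct]
    rw [h2, Finset.sum_congr rfl fun y _ => h1 y]
    rw [Finset.sum_fiberwise_of_maps_to (fun b _ => Finset.mem_univ (Quotient.mk s b))]
    exact Finset.sum_comm
  have hTmul : ∀ x : Quotient s, T.mulVec (fun _ => 1) x
      = (ht x)⁻¹ * Qt.mulVec ht x := by
    intro x
    simp only [Matrix.mulVec, dotProduct, hTdef, mul_one]
    rw [Finset.mul_sum]
    exact Finset.sum_congr rfl fun y _ => by ring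
  constructor
  · intro hS
    have hrow : ∀ c, ∑ b, Q c b = 1 := by
      intro c
      have := congrFun hS c
      simpa [Matrix.mulVec, dotProduct] using this
    have hfix : Qt.mulVec ht = ht := by
      funext x
      rw [key]
      simp [hrow, ht]
    refine ⟨hfix, hT0, ?_⟩
    funext x
    rw [hTmul, hfix]
    exact inv_mul_cancel₀ (hht_pos x).ne'
  · intro hS
    have hrow : ∀ c, ∑ b, Q c b ≤ 1 := by
      intro c
      have := hS c
      simpa [Matrix.mulVec, dotProduct] using this
    have hle : ∀ x, Qt.mulVec ht x ≤ ht x := by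
      intro x
      rw [key]
      calc ∑ c ∈ Finset.univ.filter (fun c => Quotient.mk s c = x), ∑ b, Q c b
          ≤ ∑ c ∈ Finset.univ.filter (fun c => Quotient.mk s c = x), 1 :=
            Finset.sum_le_sum fun c _ => hrow c
        _ = ht x := by simp [ht]
    refine ⟨hle, hT0, ?_⟩
    intro x
    rw [hTmul]
    rw [inv_mul_le_iff₀ (hht_pos x), mul_one]
    exact hle x
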